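/- Let d ≥ 0, e = 2^d, and ν a suitable tuple. If n_{e−1} = 1 then M_d^ν maps the subspace of even vectors {v : v_e = 0} bijectively onto the subspace {v : v_1 = 0}; if n_{e−1} = 0 then M_d^ν maps the subspace of even vectors bijectively onto itself. -/

import Mathlib

open Matrix

/-- The Pascal-triangle matrix over `F₂`: `M 0 = (1)`,
`M (d+1) = [[M d, M d],[0, M d]]`. -/
def pascalM : (d : ℕ) → Matrix (Fin (2^d)) (Fin (2^d)) (ZMod 2)
  | 0 => fun _ _ => 1
  | d+1 =>
    Matrix.reindex (finSumFinEquiv.trans (finCongr (by rw [pow_succ]; ring)))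
      (finSumFinEquiv.trans (finCongr (by rw [pow_succ]; ring)))
      (Matrix.fromBlocks (pascalM d) (pascalM d) 0 (pascalM d))

/-- The `n`-th vector of `F₂^e` in lexicographic order (as binary words,
index `0` being the most significant bit). -/
def vecOf (e n : ℕ) : Fin e → ZMod 2 := fun i => ((n / 2^(e - 1 - i.val)) % 2 : ℕ)

/-- Rotation moving the last entry of a vector to the front. -/
def rot {e : ℕ} (v : Fin e → ZMod 2) : Fin e → ZMod 2 :=
  fun i => v ⟨(i.val + (e - 1)) % e, Nat.mod_lt _ i.pos⟩

/-- `Suitable e ν` : the tuple `(ν 0, …, ν (e-1))` (representing `n_1,…,n_e`)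
satisfies `n_e = 0` and `n_{i+1} ≤ n_i ≤ n_{i+1}+1`. -/
def Suitable (e : ℕ) (ν : ℕ → ℕ) : Prop :=
  ν (e - 1) = 0 ∧ ∀ j, j + 2 ≤ e → ν (j+1) ≤ ν j ∧ ν j ≤ ν (j+1) + 1

/-- The matrix `M_d^ν`, whose `j`-th column is the `j`-th column of `M_d`
rotated `ν j` times. -/
def pascalMnu (d : ℕ) (ν : ℕ → ℕ) : Matrix (Fin (2^d)) (Fin (2^d)) (ZMod 2) :=
  fun i j => (rot^[ν j.val] (fun r => pascalM d r j)) i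

/-- The `d`-th Levin block `λ_d = (M_d w_0)(M_d w_1)⋯(M_d w_{2^e-1})`
as an `ℕ`-indexed word (`e = 2^d`). -/
def levinBlock (d : ℕ) (p : ℕ) : ZMod 2 :=
  (pascalM d).mulVec (vecOf (2^d) (p / 2^d)) ⟨p % 2^d, Nat.mod_lt _ (Nat.two_pow_pos d)⟩

/-- Length of the `d`-th Levin block: `2^d · 2^(2^d)`. -/
def levinLen (d : ℕ) : ℕ := 2^d * 2^(2^d)

/-- The binary expansion of Levin's number `λ = λ₀λ₁λ₂⋯`. -/
def levinWord (p : ℕ) : ZMod 2 := go 0 p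
where
  go (d p : ℕ) : ZMod 2 :=
    if p < levinLen d then levinBlock d p else go (d+1) (p - levinLen d)
  termination_by p
  decreasing_by
    
    have h1 : 0 < levinLen d :=
      Nat.mul_pos (Nat.two_pow_pos d) (Nat.two_pow_pos (2^d))
    omega

/-- Levin's number as a real number in `[0,1)`. -/
noncomputable def levinReal : ℝ := ∑' p : ℕ, ((levinWord p).val : ℝ) / 2^(p+1)

/-- Distance from a real number to the nearest integer. -/
noncomputable def torusDist (y : ℝ) : ℝ := |y - round y|

/-- The pair-correlation counting function
`F_N(s) = (1/N) · #{(i,j) : 1 ≤ i ≠ j ≤ N, ‖x_i − x_j‖ < s/N}`. -/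
noncomputable def pairF (x : ℕ → ℝ) (N : ℕ) (s : ℝ) : ℝ :=
  (Nat.card {p : ℕ × ℕ // 1 ≤ p.1 ∧ p.1 ≤ N ∧ 1 ≤ p.2 ∧ p.2 ≤ N ∧ p.1 ≠ p.2 ∧
      torusDist (x p.1 - x p.2) < s / N} : ℝ) / N

/-- Poissonian pair correlations: `F_N(s) → 2s` for every `s ≥ 0`. -/
def PoissonianPC (x : ℕ → ℝ) : Prop :=
  ∀ s : ℝ, 0 ≤ s → Filter.Tendsto (fun N => pairF x N s) Filter.atTop (nhds (2*s))

/-!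
Index coordinates from `0` and read `v : Fin e → F₂` as the polynomial `∑ v i x^i` of degree
`< e`. Since `(1 + x)^(2^d) = 1 + x^(2^d)` over `F₂`, the entries of `M_d` are `binom j i`: its
columns are `(1 + x)^j` and it is the involution `p(x) ↦ p(x + 1)`. Rotation is multiplication
by `x` modulo `x^e - 1`, and suitability gives `ν j + j < e`, so there is no wrap-around and
column `j` of `M_d^ν` is `x^(ν j) (1 + x)^j`. Applying `M_d` turns it into `(1 + x)^(ν j) x^j`,
so `M_d M_d^ν` is lower unitriangular and `M_d^ν` is invertible.

Column `e - 1` is `(1 + x)^(e-1)` since `ν (e-1) = 0`. If `ν (e-2) = 1`, every other column has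
`ν j ≥ 1` and is divisible by `x`; if `ν (e-2) = 0`, every other column has `ν j + j < e - 1`.
So row `0`, respectively row `e - 1`, of `M_d^ν` is the last unit vector, and an invertible
matrix whose row `p` is the `q`-th unit vector maps `{v | v q = 0}` bijectively onto
`{w | w p = 0}`.
-/

open Finset Fin.NatCast

open Polynomial in
theorem choose_add_two_pow (b d k : ℕ) :
    (((b + 2^d).choose k : ℕ) : ZMod 2) =
      b.choose k + if 2^d ≤ k then (b.choose (k - 2^d) : ZMod 2) else 0 := by
  rw [← coeff_X_add_one_pow (ZMod 2), pow_add, add_pow_char_pow, one_pow, mul_add, mul_one,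
    coeff_add, mul_comm, coeff_X_pow_mul', coeff_X_add_one_pow, add_comm]
  split_ifs <;> simp [coeff_X_add_one_pow]

theorem Matrix.bijOn_mulVec_of_row_eq_single {n R : Type*} [Fintype n] [DecidableEq n]
    [CommRing R] {A : Matrix n n R} (hA : IsUnit A) {p q : n} (hp : A p = Pi.single q 1) :
    Set.BijOn A.mulVec {v | v q = 0} {w | w p = 0} := by
  have hbij : Function.Bijective A.mulVec :=
    ⟨mulVec_injective_of_isUnit hA, mulVec_surjective_iff_isUnit.2 hA⟩
  have hrow (v : n → R) : (A *ᵥ v) p = v q := by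
    show A p ⬝ᵥ v = v q
    rw [hp, single_dotProduct, one_mul]
  have hsource : {v : n → R | v q = 0} = A.mulVec ⁻¹' {w | w p = 0} := by
    ext v
    rw [Set.mem_preimage, Set.mem_ofPred_eq, Set.mem_ofPred_eq, hrow]
  exact hsource ▸ hbij.bijOn_preimage

theorem rot_apply {e : ℕ} [NeZero e] (v : Fin e → ZMod 2) (i : Fin e) : rot v i = v (i - 1) := by
  obtain ⟨m, rfl⟩ := Nat.exists_eq_succ_of_ne_zero (NeZero.ne e)
  refine congrArg v (Fin.ext ?_)
  show ((i : ℕ) + (m + 1 - 1)) % (m + 1) = (i - 1 : Fin (m + 1))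
  rw [Fin.coe_sub_one]
  split_ifs with h
  · simp [h]
  · have : 0 < (i : ℕ) := Nat.pos_of_ne_zero (Fin.val_ne_of_ne h)
    rw [show (i : ℕ) + (m + 1 - 1) = (i - 1) + (m + 1) by omega, Nat.add_mod_right,
      Nat.mod_eq_of_lt (by omega)]

theorem rot_iterate_apply {e : ℕ} [NeZero e] (n : ℕ) (v : Fin e → ZMod 2) (i : Fin e) :
    rot^[n] v i = v (i - (n : Fin e)) := by
  induction n generalizing v with
  | zero => simp
  | succ n ih => rw [Function.iterate_succ_apply, ih, rot_apply, Nat.cast_succ, sub_add_eq_sub_sub]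

namespace Suitable

variable {e : ℕ} {ν : ℕ → ℕ}

theorem apply_le_apply (h : Suitable e ν) {j k : ℕ} (hjk : j ≤ k) (hk : k < e) : ν k ≤ ν j := by
  induction k, hjk using Nat.le_induction with
  | base => rfl
  | succ k _ ih => exact (h.2 k (by omega)).1.trans (ih (by omega))

theorem apply_le_apply_add (h : Suitable e ν) {j k : ℕ} (hjk : j ≤ k) (hk : k < e) :
    ν j ≤ ν k + (k - j) := by
  induction k, hjk using Nat.le_induction with
  | base => omega
  | succ k _ ih => have := (h.2 k (by omega)).2; have := ih (by omega); omega

theorem apply_add_le (h : Suitable e ν) {j : ℕ} (hj : j < e) : ν j + j ≤ e - 1 := by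
  have := h.apply_le_apply_add (j := j) (k := e - 1) (by omega) (by omega)
  rw [h.1] at this
  omega

end Suitable

theorem pascalM_succ_apply (d : ℕ) (x y : Fin (2^d) ⊕ Fin (2^d)) :
    pascalM (d+1) (finCongr (by omega : 2^d + 2^d = 2^(d+1)) (finSumFinEquiv x))
      (finCongr (by omega : 2^d + 2^d = 2^(d+1)) (finSumFinEquiv y)) =
      fromBlocks (pascalM d) (pascalM d) 0 (pascalM d) x y := by
  simp [pascalM, reindex_apply]

theorem pascalM_apply : ∀ (d : ℕ) (i j : Fin (2^d)), pascalM d i j = ((j : ℕ).choose i : ZMod 2)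
  | 0, i, j => by fin_cases i; fin_cases j; simp [pascalM]
  | d + 1, i, j => by
    have h : 2^d + 2^d = 2^(d+1) := by omega
    obtain ⟨x, rfl⟩ := (finSumFinEquiv.trans (finCongr h)).surjective i
    obtain ⟨y, rfl⟩ := (finSumFinEquiv.trans (finCongr h)).surjective j
    rw [Equiv.trans_apply, Equiv.trans_apply, pascalM_succ_apply]
    have hlow (a b : Fin (2^d)) : (b : ℕ).choose (a + 2^d) = 0 :=
      Nat.choose_eq_zero_of_lt (by omega)
    rcases x with a | a <;> rcases y with b | b <;>
      simp [pascalM_apply d, choose_add_two_pow, hlow]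

theorem pascalM_mul_self : ∀ d, pascalM d * pascalM d = 1
  | 0 => by ext i j; fin_cases i; fin_cases j; decide
  | d + 1 => by
    rw [pascalM, reindex_apply, submatrix_mul_equiv, fromBlocks_multiply, pascalM_mul_self d,
      CharTwo.add_self_eq_zero]
    simp only [mul_zero, zero_mul, add_zero, zero_add, fromBlocks_one]
    exact submatrix_one_equiv (finSumFinEquiv.trans (finCongr _)).symm

theorem sum_range_choose_mul_choose {d a b : ℕ} (ha : a < 2^d) (hb : b < 2^d) :
    ∑ t ∈ range (2^d), (t.choose a * b.choose t : ZMod 2) = if a = b then 1 else 0 := by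
  have := congrFun₂ (pascalM_mul_self d) ⟨a, ha⟩ ⟨b, hb⟩
  simp only [mul_apply, pascalM_apply, one_apply, Fin.mk.injEq] at this
  rwa [Fin.sum_univ_eq_sum_range (fun t => (t.choose a * b.choose t : ZMod 2))] at this

theorem sum_range_choose_add_mul_choose {d i j : ℕ} (n : ℕ) (hi : i < 2^d) (hj : j < 2^d) :
    ∑ s ∈ range (2^d), ((s + n).choose i * j.choose s : ZMod 2) =
      if j ≤ i then (n.choose (i - j) : ZMod 2) else 0 := by
  calc ∑ s ∈ range (2^d), ((s + n).choose i * j.choose s : ZMod 2)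
      = ∑ s ∈ range (2^d), ∑ p ∈ antidiagonal i,
          (n.choose p.2 : ZMod 2) * (s.choose p.1 * j.choose s) := by
        refine sum_congr rfl fun s _ => ?_
        rw [Nat.add_choose_eq, Nat.cast_sum, sum_mul]
        exact sum_congr rfl fun p _ => by push_cast; ring
    _ = ∑ p ∈ antidiagonal i, (n.choose p.2 : ZMod 2) * if p.1 = j then 1 else 0 := by
        rw [sum_comm]
        refine sum_congr rfl fun p hp => ?_
        rw [← mul_sum, sum_range_choose_mul_choose (by have := mem_antidiagonal.1 hp; omega) hj]
    _ = if j ≤ i then (n.choose (i - j) : ZMod 2) else 0 := by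
        simp [Nat.sum_antidiagonal_eq_sum_range_succ_mk]

theorem pascalMnu_apply {d : ℕ} {ν : ℕ → ℕ} (h : Suitable (2^d) ν) (i j : Fin (2^d)) :
    pascalMnu d ν i j = if ν j ≤ i then ((j : ℕ).choose (i - ν j) : ZMod 2) else 0 := by
  have hν := h.apply_add_le j.isLt
  have hcast : ((ν j : Fin (2^d)) : ℕ) = ν j := Fin.val_cast_of_lt (by omega)
  rw [pascalMnu, rot_iterate_apply, pascalM_apply]
  split_ifs with hle
  · rw [Fin.coe_sub_iff_le.2 (by rw [Fin.le_def, hcast]; exact hle), hcast]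
  · rw [Fin.coe_sub_iff_lt.2 (by rw [Fin.lt_def, hcast]; omega), hcast,
      Nat.choose_eq_zero_of_lt (by omega), Nat.cast_zero]

theorem pascalM_mul_pascalMnu {d : ℕ} {ν : ℕ → ℕ} (h : Suitable (2^d) ν) (i j : Fin (2^d)) :
    (pascalM d * pascalMnu d ν) i j = if j ≤ i then ((ν j).choose (i - j) : ZMod 2) else 0 := by
  have hν : ν j + j ≤ 2^d - 1 := h.apply_add_le j.isLt
  let f (t : ℕ) : ZMod 2 :=
    (t.choose i : ZMod 2) * if ν j ≤ t then ((j : ℕ).choose (t - ν j) : ZMod 2) else 0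
  have hf : ∀ t ≥ 2^d, f t = 0 := fun t ht => by
    simp [f, Nat.choose_eq_zero_of_lt (show (j : ℕ) < t - ν j by omega)]
  calc (pascalM d * pascalMnu d ν) i j = ∑ t ∈ range (2^d), f t := by
        simp only [mul_apply, pascalM_apply, pascalMnu_apply h, f]
        exact Fin.sum_univ_eq_sum_range f _
    _ = ∑ t ∈ range (ν j + 2^d), f t :=
        sum_subset (range_subset_range.2 (by omega)) fun t _ ht => hf t (by simpa using ht)
    _ = ∑ s ∈ range (2^d), ((s + ν j).choose i * (j : ℕ).choose s : ZMod 2) := by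
        rw [sum_range_add, sum_eq_zero fun t ht => by simp [f, (mem_range.1 ht).not_ge], zero_add]
        simp [f, add_comm]
    _ = _ := sum_range_choose_add_mul_choose (ν j) i.isLt j.isLt

theorem pascalMnu_isUnit {d : ℕ} {ν : ℕ → ℕ} (h : Suitable (2^d) ν) : IsUnit (pascalMnu d ν) := by
  have hdet : (pascalM d * pascalMnu d ν).det = 1 := by
    rw [det_of_isLowerTriangular _ fun i j hij => ?_]
    · simp [pascalM_mul_pascalMnu h]
    · rw [pascalM_mul_pascalMnu h, if_neg (not_le.2 (show i < j from hij))]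
  rw [det_mul] at hdet
  exact (isUnit_iff_isUnit_det _).2 (IsUnit.of_mul_eq_one_right _ hdet)

theorem pascalMnu_row_zero {d : ℕ} {ν : ℕ → ℕ} (h : Suitable (2^d) ν) (h1 : ν (2^d - 2) = 1) :
    pascalMnu d ν ⟨0, Nat.two_pow_pos d⟩ =
      Pi.single ⟨2^d - 1, by have := Nat.two_pow_pos d; omega⟩ 1 := by
  ext j
  rw [pascalMnu_apply h, Pi.single_apply]
  by_cases hj : (j : ℕ) = 2^d - 1
  · simp [Fin.ext_iff, hj, h.1]
  · have := h.apply_le_apply (j := j) (k := 2^d - 2) (by omega) (by omega)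
    rw [if_neg (show ¬ν j ≤ 0 by omega), if_neg (fun hj' => hj (congrArg Fin.val hj'))]

theorem pascalMnu_row_last {d : ℕ} {ν : ℕ → ℕ} (h : Suitable (2^d) ν) (h0 : ν (2^d - 2) = 0) :
    pascalMnu d ν ⟨2^d - 1, by have := Nat.two_pow_pos d; omega⟩ =
      Pi.single ⟨2^d - 1, by have := Nat.two_pow_pos d; omega⟩ 1 := by
  ext j
  rw [pascalMnu_apply h, Pi.single_apply]
  by_cases hj : (j : ℕ) = 2^d - 1
  · simp [Fin.ext_iff, hj, h.1]
  · have := h.apply_le_apply_add (j := j) (k := 2^d - 2) (by omega) (by omega)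
    simp [Fin.ext_iff, hj, Nat.choose_eq_zero_of_lt (show (j : ℕ) < 2^d - 1 - ν j by omega)]

/-- if `n_{e-1} = 1` then `M_d^ν` maps the even vectors
bijectively onto the vectors whose first coordinate is `0`; if `n_{e-1} = 0`
then `M_d^ν` maps the even vectors bijectively onto themselves. -/
theorem pascalMnu_even_bijOn (d : ℕ) (ν : ℕ → ℕ)
    (h : Suitable (2^d) ν) :
    (ν (2^d - 2) = 1 →
      Set.BijOn ((pascalMnu d ν).mulVec)
        {v : Fin (2^d) → ZMod 2 | v ⟨2^d - 1, by have := Nat.two_pow_pos d; omega⟩ = 0}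
        {v : Fin (2^d) → ZMod 2 | v ⟨0, Nat.two_pow_pos d⟩ = 0}) ∧
    (ν (2^d - 2) = 0 →
      Set.BijOn ((pascalMnu d ν).mulVec)
        {v : Fin (2^d) → ZMod 2 | v ⟨2^d - 1, by have := Nat.two_pow_pos d; omega⟩ = 0}
        {v : Fin (2^d) → ZMod 2 | v ⟨2^d - 1, by have := Nat.two_pow_pos d; omega⟩ = 0}) :=
  ⟨fun h1 => bijOn_mulVec_of_row_eq_single (pascalMnu_isUnit h) (pascalMnu_row_zero h h1),
    fun h0 => bijOn_mulVec_of_row_eq_single (pascalMnu_isUnit h) (pascalMnu_row_last h h0)⟩
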